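/- If the network is asymmetric, i.e. E_{M,D} = ℝ^n, then the stability condition holds in the harmonic case: if q, p : ℝ → ℝ^N are differentiable curves satisfying q′(t) = p(t), p′(t) = −Γ q(t) for all t, and p_i(t) = 0 for every i ∈ D and every t ∈ ℝ, then q(t) = 0 and p(t) = 0 for all t. -/

import Mathlib

/-!
Put `x = (q, p)`, so that `x' = M x` (the damping term `-I_D p` vanishes). Differentiating
`p_i = 0` repeatedly gives `(M^k x)_{N+i} = 0` for `i ∈ D` and all `k`. The matrix
`S = diag(-Γ, 1)` is symmetric and satisfies `S M = Mᵀ S`, and it fixes `e_{N+i}`, so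
`⟪S x, M^k e_{N+i}⟫ = ⟪M^k x, e_{N+i}⟫ = 0`. By asymmetry these vectors span `ℝ^n`, hence
`S x = (-Γ q, p) = 0`, and `q = 0` because `Γ = I + Δ` is positive definite.
-/

open Matrix

section

variable {ι : Type*} [Fintype ι]

theorem eq_zero_of_forall_dotProduct_eq_zero_of_span_eq_top {R : Type*} [CommRing R]
    [LinearOrder R] [IsStrictOrderedRing R] {s : Set (ι → R)} (hs : Submodule.span R s = ⊤)
    {y : ι → R} (hy : ∀ v ∈ s, y ⬝ᵥ v = 0) : y = 0 := by
  have : dotProductBilin R R y = 0 := LinearMap.ext_on hs hy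
  exact dotProduct_self_eq_zero.mp (LinearMap.congr_fun this y)

variable [DecidableEq ι]

theorem pow_mulVec_apply_eq_zero_of_hasDerivAt {A : Matrix ι ι ℝ} {x : ℝ → ι → ℝ}
    (hx : ∀ t, HasDerivAt x (A *ᵥ x t) t) {j : ι} (hj : ∀ t, x t j = 0) (k : ℕ) (t : ℝ) :
    (A ^ k *ᵥ x t) j = 0 := by
  induction k generalizing t with
  | zero => simpa using hj t
  | succ k ih =>
    have hderiv : HasDerivAt (fun s => (A ^ k *ᵥ x s) j) ((A ^ k *ᵥ (A *ᵥ x t)) j) t :=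
      hasDerivAt_pi.1
        ((A ^ k).mulVecLin.toContinuousLinearMap.hasFDerivAt.comp_hasDerivAt t (hx t)) j
    rw [show (fun s => (A ^ k *ᵥ x s) j) = fun _ => 0 from funext ih] at hderiv
    rw [pow_succ, ← mulVec_mulVec, hderiv.unique (hasDerivAt_const t 0)]

variable {R : Type*} [CommRing R]

theorem dotProduct_mulVec_pow_of_semiconjBy {S M : Matrix ι ι R} (hS : Sᵀ = S)
    (h : SemiconjBy S M Mᵀ) (x v : ι → R) (k : ℕ) :
    (S *ᵥ x) ⬝ᵥ (M ^ k *ᵥ v) = (M ^ k *ᵥ x) ⬝ᵥ (S *ᵥ v) := by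
  calc (S *ᵥ x) ⬝ᵥ (M ^ k *ᵥ v) = x ⬝ᵥ ((S * M ^ k) *ᵥ v) := by
        rw [← hS, mulVec_transpose, ← dotProduct_mulVec, hS, mulVec_mulVec]
    _ = x ⬝ᵥ ((M ^ k)ᵀ *ᵥ (S *ᵥ v)) := by
        rw [(h.pow_right k).eq, transpose_pow, mulVec_mulVec]
    _ = (M ^ k *ᵥ x) ⬝ᵥ (S *ᵥ v) := by
        rw [dotProduct_transpose_mulVec, dotProduct_comm]

end

section

variable {n : Type*} [Fintype n] [DecidableEq n]

theorem semiconjBy_fromBlocks_transpose {R : Type*} [Ring R] {Γ ID : Matrix n n R}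
    (hΓ : Γᵀ = Γ) (hID : IDᵀ = ID) :
    SemiconjBy (fromBlocks (-Γ) 0 0 1) (fromBlocks 0 1 (-Γ) (-ID))
      (fromBlocks 0 1 (-Γ) (-ID))ᵀ := by
  simp [SemiconjBy, fromBlocks_transpose, fromBlocks_multiply, hΓ, hID]

theorem hasDerivAt_sumElim_fromBlocks_mulVec {Γ ID : Matrix n n ℝ} {q p : ℝ → n → ℝ}
    (hq : ∀ t, HasDerivAt q (p t) t) (hp : ∀ t, HasDerivAt p (-(Γ *ᵥ q t)) t)
    (hIDp : ∀ t, ID *ᵥ p t = 0) (t : ℝ) :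
    HasDerivAt (fun s => Sum.elim (q s) (p s))
      (fromBlocks 0 1 (-Γ) (-ID) *ᵥ Sum.elim (q t) (p t)) t := by
  rw [hasDerivAt_pi]
  rintro (j | j)
  · simpa [fromBlocks_mulVec] using hasDerivAt_pi.1 (hq t) j
  · simpa [fromBlocks_mulVec, neg_mulVec, hIDp t] using hasDerivAt_pi.1 (hp t) j

end

theorem stmt7_general (N : ℕ) (G : SimpleGraph (Fin N)) [DecidableRel G.Adj]
    (D : Finset (Fin N))
    (Γ : Matrix (Fin N) (Fin N) ℝ)
    (hΓ : Γ = 1 + (Matrix.diagonal (fun i => (G.degree i : ℝ)) - G.adjMatrix ℝ))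
    (ID : Matrix (Fin N) (Fin N) ℝ)
    (hID : ID = Matrix.diagonal (fun i => if i ∈ D then (1 : ℝ) else 0))
    (M : Matrix (Fin N ⊕ Fin N) (Fin N ⊕ Fin N) ℝ)
    (hM : M = Matrix.fromBlocks 0 1 (-Γ) (-ID))
    (hasym : Submodule.span ℝ
      {v : (Fin N ⊕ Fin N) → ℝ | ∃ i ∈ D, ∃ k : ℕ, v = (M ^ k).mulVec (Pi.single (Sum.inr i) 1)}
      = ⊤)
    (q p : ℝ → Fin N → ℝ)
    (hq : ∀ t : ℝ, HasDerivAt q (p t) t)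
    (hp : ∀ t : ℝ, HasDerivAt p (-(Γ.mulVec (q t))) t)
    (hpD : ∀ i ∈ D, ∀ t : ℝ, p t i = 0) :
    ∀ t : ℝ, q t = 0 ∧ p t = 0 := by
  have hΓpd : Γ.PosDef := hΓ ▸ PosDef.one.add_posSemidef (G.posSemidef_lapMatrix ℝ)
  have hΓsymm : Γᵀ = Γ := by simpa using hΓpd.isHermitian.eq
  have hIDp : ∀ t, ID *ᵥ p t = 0 := fun t => by
    ext j
    by_cases hj : j ∈ D <;> simp [hID, mulVec_diagonal, hj, hpD]
  set S : Matrix (Fin N ⊕ Fin N) (Fin N ⊕ Fin N) ℝ := fromBlocks (-Γ) 0 0 1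
  have hS : Sᵀ = S := by simp [S, fromBlocks_transpose, hΓsymm]
  have hSM : SemiconjBy S M Mᵀ := hM ▸ semiconjBy_fromBlocks_transpose hΓsymm (by simp [hID])
  have hx : ∀ t, HasDerivAt (fun s => Sum.elim (q s) (p s)) (M *ᵥ Sum.elim (q t) (p t)) t :=
    hM ▸ hasDerivAt_sumElim_fromBlocks_mulVec hq hp hIDp
  intro t
  have hSx : S *ᵥ Sum.elim (q t) (p t) = 0 := by
    refine eq_zero_of_forall_dotProduct_eq_zero_of_span_eq_top hasym ?_
    rintro _ ⟨i, hi, k, rfl⟩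
    have hSe : S *ᵥ Pi.single (Sum.inr i) 1 = Pi.single (Sum.inr i) 1 := by
      ext (j | j) <;> simp [S, mulVec_single, Pi.single_apply, one_apply]
    rw [dotProduct_mulVec_pow_of_semiconjBy hS hSM, hSe, dotProduct_single,
      pow_mulVec_apply_eq_zero_of_hasDerivAt hx (j := Sum.inr i) (hpD i hi) k t, zero_mul]
  simp only [S, fromBlocks_mulVec, Sum.elim_comp_inl, Sum.elim_comp_inr, neg_mulVec,
    zero_mulVec, one_mulVec, add_zero, zero_add] at hSx
  rw [← Sum.elim_zero_zero, Sum.elim_eq_iff, neg_eq_zero] at hSx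
  exact ⟨mulVec_injective_iff_isUnit.mpr hΓpd.isUnit (hSx.1.trans (mulVec_zero Γ).symm), hSx.2⟩

/-- If the network is asymmetric, the stability condition holds in the
harmonic case: any solution of the Hamiltonian flow whose momenta vanish on all
damped vertices is identically zero. -/
theorem stmt7 (N : ℕ) (hN : 0 < N) (G : SimpleGraph (Fin N)) [DecidableRel G.Adj]
    (hG : G.Connected)
    (D : Finset (Fin N)) (hD : D.Nonempty)
    (Γ : Matrix (Fin N) (Fin N) ℝ)
    (hΓ : Γ = 1 + (Matrix.diagonal (fun i => (G.degree i : ℝ)) - G.adjMatrix ℝ))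
    (ID : Matrix (Fin N) (Fin N) ℝ)
    (hID : ID = Matrix.diagonal (fun i => if i ∈ D then (1 : ℝ) else 0))
    (M : Matrix (Fin N ⊕ Fin N) (Fin N ⊕ Fin N) ℝ)
    (hM : M = Matrix.fromBlocks 0 1 (-Γ) (-ID))
    (hasym : Submodule.span ℝ
      {v : (Fin N ⊕ Fin N) → ℝ | ∃ i ∈ D, ∃ k : ℕ, v = (M ^ k).mulVec (Pi.single (Sum.inr i) 1)}
      = ⊤)
    (q p : ℝ → Fin N → ℝ)
    (hq : ∀ t : ℝ, HasDerivAt q (p t) t)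
    (hp : ∀ t : ℝ, HasDerivAt p (-(Γ.mulVec (q t))) t)
    (hpD : ∀ i ∈ D, ∀ t : ℝ, p t i = 0) :
    ∀ t : ℝ, q t = 0 ∧ p t = 0 :=
  stmt7_general N G D Γ hΓ ID hID M hM hasym q p hq hp hpD
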